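/- (Theorem 2, one BSKM1 step in expectation.) Let A ∈ ℝ^{m×n} be nonzero, b ∈ ℝ^m, and let x_⋆ ∈ range(Aᵀ) satisfy A x_⋆ = b. Let x ∈ range(Aᵀ) with Ax ≠ b, and fix 1 ≤ β ≤ m. For each β-element subset τ ⊆ {1,…,m}, let t(τ) ∈ τ attain max_{j∈τ}(b_j − A_j x)², let I(τ) = {h ∈ {1,…,m}∖τ : (b_h − A_h x)² ≥ max_{j∈τ}(b_j − A_j x)²} ∪ {t(τ)}, and let x₊(τ) be the orthogonal projection of x onto {y : A_{I(τ)} y = b_{I(τ)}}. Define ξ = (Σ_τ ‖A_τ x − b_τ‖₂²)/(Σ_τ ‖A_τ x − b_τ‖_∞²), where both sums range over all β-element subsets τ. If γ > 0 satisfies γ ≤ |I(τ)| / λ_max(A_{I(τ)}ᵀ A_{I(τ)}) for every β-element subset τ, then the uniform average over all β-element subsets satisfies C(m,β)^{-1} Σ_τ ‖x₊(τ) − x_⋆‖₂² ≤ (1 − (β γ /(ξ m)) λ_min⁺(AᵀA)) ‖x − x_⋆‖₂². -/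

import Mathlib

open Matrix Finset

noncomputable def lambdaMax {N : Type*} [Fintype N] [DecidableEq N]
    {M : Matrix N N ℝ} (hM : M.IsHermitian) : ℝ := ⨆ i, hM.eigenvalues i

/-- The smallest positive eigenvalue of a real symmetric (Hermitian) matrix. -/
noncomputable def lambdaMinPos {N : Type*} [Fintype N] [DecidableEq N]
    {M : Matrix N N ℝ} (hM : M.IsHermitian) : ℝ :=
  sInf {μ : ℝ | 0 < μ ∧ ∃ i, hM.eigenvalues i = μ}

/-- The row submatrix `A_I` of `A` with rows indexed by the finite set `I`. -/
def rowSub {m n : ℕ} (A : Matrix (Fin m) (Fin n) ℝ) (I : Finset (Fin m)) :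
    Matrix {i // i ∈ I} (Fin n) ℝ := A.submatrix Subtype.val id

/-- The Gram matrix `A_Iᵀ * A_I`. -/
def gram {m n : ℕ} (A : Matrix (Fin m) (Fin n) ℝ) (I : Finset (Fin m)) :
    Matrix (Fin n) (Fin n) ℝ := (rowSub A I)ᵀ * rowSub A I

/-- All subsets of `{0, …, m-1}` of cardinality `β`. -/
def subsetsCard (m β : ℕ) : Finset (Finset (Fin m)) :=
  Finset.powersetCard β (Finset.univ : Finset (Fin m))

open scoped RealInnerProductSpace

section spectral
variable {N : Type*} [Fintype N] [DecidableEq N] {M : Matrix N N ℝ} (hM : M.IsHermitian)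

lemma star_U_real (U : Matrix N N ℝ) : star U = Uᵀ := by
  rw [Matrix.star_eq_conjTranspose, Matrix.conjTranspose_eq_transpose_of_trivial]

lemma coord_decomp (v : N → ℝ) :
    v ⬝ᵥ v = ∑ i, ((star (hM.eigenvectorUnitary : Matrix N N ℝ)) *ᵥ v) i ^ 2 := by
  have h1 : ∀ z : N → ℝ, z ⬝ᵥ z = ∑ i, z i ^ 2 := by
    intro z; simp [dotProduct, sq]
  rw [← h1]
  set U := (hM.eigenvectorUnitary : Matrix N N ℝ) with hU
  have : (star U *ᵥ v) ⬝ᵥ (star U *ᵥ v) = (U *ᵥ (star U *ᵥ v)) ⬝ᵥ v := by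
    rw [Matrix.dotProduct_mulVec]
    congr 1
    rw [star_U_real, Matrix.vecMul_transpose]
  rw [this, Matrix.mulVec_mulVec, Matrix.mem_unitaryGroup_iff.mp hM.eigenvectorUnitary.2,
    Matrix.one_mulVec]

lemma quad_decomp (v : N → ℝ) :
    v ⬝ᵥ (M *ᵥ v) =
      ∑ i, hM.eigenvalues i * ((star (hM.eigenvectorUnitary : Matrix N N ℝ)) *ᵥ v) i ^ 2 := by
  set U := (hM.eigenvectorUnitary : Matrix N N ℝ) with hU
  set w := star U *ᵥ v with hw
  conv_lhs => rw [hM.spectral_theorem]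
  rw [Unitary.conjStarAlgAut_apply]
  rw [← Matrix.mulVec_mulVec, ← Matrix.mulVec_mulVec, Matrix.dotProduct_mulVec]
  have hvm : Matrix.vecMul v U = w := by
    rw [hw, star_U_real, ← Matrix.vecMul_transpose, Matrix.transpose_transpose]
  rw [hvm]
  have hd : (Matrix.diagonal (RCLike.ofReal ∘ hM.eigenvalues) : Matrix N N ℝ) *ᵥ w
      = fun i => hM.eigenvalues i * w i := by
    funext i; simp [Matrix.mulVec_diagonal]
  rw [hd]
  simp only [dotProduct]
  exact Finset.sum_congr rfl fun i _ => by ring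

lemma quad_le_lambdaMax (v : N → ℝ) :
    v ⬝ᵥ (M *ᵥ v) ≤ lambdaMax hM * (v ⬝ᵥ v) := by
  rw [quad_decomp hM v, coord_decomp hM v, Finset.mul_sum]
  refine Finset.sum_le_sum fun i _ => ?_
  have h1 : hM.eigenvalues i ≤ lambdaMax hM :=
    le_ciSup (Set.Finite.bddAbove (Set.finite_range _)) i
  exact mul_le_mul_of_nonneg_right h1 (sq_nonneg _)

end spectral

lemma transpose_quad {m n : ℕ} (A : Matrix (Fin m) (Fin n) ℝ) (z : Fin n → ℝ) :
    z ⬝ᵥ ((Aᵀ * A) *ᵥ z) = (A *ᵥ z) ⬝ᵥ (A *ᵥ z) := by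
  rw [← Matrix.mulVec_mulVec, Matrix.dotProduct_mulVec, Matrix.vecMul_transpose]

lemma AtA_posSemidef {m n : ℕ} (A : Matrix (Fin m) (Fin n) ℝ) : (Aᵀ * A).PosSemidef := by
  rw [← Matrix.conjTranspose_eq_transpose_of_trivial]
  exact Matrix.posSemidef_conjTranspose_mul_self A

lemma lambdaMinPos_quad {m n : ℕ} (A : Matrix (Fin m) (Fin n) ℝ) (hAA : (Aᵀ * A).IsHermitian)
    (u : Fin m → ℝ) (v : Fin n → ℝ) (hv : v = Aᵀ *ᵥ u) :
    lambdaMinPos hAA * (v ⬝ᵥ v) ≤ v ⬝ᵥ ((Aᵀ * A) *ᵥ v) := by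
  rw [quad_decomp hAA v, coord_decomp hAA v, Finset.mul_sum]
  refine Finset.sum_le_sum fun i _ => ?_
  set U := (hAA.eigenvectorUnitary : Matrix (Fin n) (Fin n) ℝ) with hU
  by_cases hwi : (star U *ᵥ v) i = 0
  · simp [hwi]
  · have hnn : 0 ≤ hAA.eigenvalues i := (AtA_posSemidef A).eigenvalues_nonneg i
    have hne : hAA.eigenvalues i ≠ 0 := by
      intro h0
      apply hwi
      set ui : Fin n → ℝ := ⇑(hAA.eigenvectorBasis i) with hui
      have h1 : (Aᵀ * A) *ᵥ ui = 0 := by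
        rw [hui, hAA.mulVec_eigenvectorBasis, h0, zero_smul]
      have h2 : (A *ᵥ ui) ⬝ᵥ (A *ᵥ ui) = 0 := by
        rw [← transpose_quad, h1, dotProduct_zero]
      have h3 : A *ᵥ ui = 0 := dotProduct_self_eq_zero.mp h2
      have h4 : (star U *ᵥ v) i = ui ⬝ᵥ v := by
        simp [Matrix.mulVec, dotProduct, star_U_real, Matrix.transpose_apply, hU,
          Matrix.IsHermitian.eigenvectorUnitary_apply, hui]
      rw [h4, hv, Matrix.dotProduct_mulVec, Matrix.vecMul_transpose, h3,
        zero_dotProduct]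
    have hpos : 0 < hAA.eigenvalues i := lt_of_le_of_ne hnn (Ne.symm hne)
    have hle : lambdaMinPos hAA ≤ hAA.eigenvalues i :=
      csInf_le ⟨0, fun μ hμ => le_of_lt hμ.1⟩ ⟨hpos, i, rfl⟩
    exact mul_le_mul_of_nonneg_right hle (sq_nonneg _)

lemma gram_quad {m n : ℕ} (A : Matrix (Fin m) (Fin n) ℝ) (I : Finset (Fin m)) (v : Fin n → ℝ) :
    v ⬝ᵥ ((gram A I) *ᵥ v) = ∑ i ∈ I, (A.mulVec v i) ^ 2 := by
  rw [_root_.gram, ← Matrix.mulVec_mulVec, Matrix.dotProduct_mulVec, Matrix.vecMul_transpose]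
  have h1 : ∀ i : {i // i ∈ I}, (rowSub A I *ᵥ v) i = A.mulVec v i.1 := fun i => rfl
  have h2 : (rowSub A I *ᵥ v) ⬝ᵥ (rowSub A I *ᵥ v)
      = ∑ i : {i // i ∈ I}, (A.mulVec v i.1) ^ 2 := by
    simp [dotProduct, h1, sq]
  rw [h2, Finset.sum_coe_sort I (fun i => (A.mulVec v i) ^ 2)]

lemma min_orth {E : Type*} [NormedAddCommGroup E] [InnerProductSpace ℝ E] (x p v : E)
    (h : ∀ s : ℝ, ‖x - p‖ ≤ ‖x - (p + s • v)‖) : ⟪x - p, v⟫ = 0 := by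
  by_contra hc
  have hv : v ≠ 0 := by rintro rfl; simp at hc
  have hv2 : (0:ℝ) < ‖v‖ ^ 2 := pow_pos (norm_pos_iff.mpr hv) 2
  set c := ⟪x - p, v⟫ with hc'
  set s0 : ℝ := c / ‖v‖ ^ 2 with hs0
  have h2 := h s0
  have h3 : ‖x - p‖ ^ 2 ≤ ‖(x - p) - s0 • v‖ ^ 2 := by
    have h4 : x - (p + s0 • v) = (x - p) - s0 • v := by abel
    calc ‖x - p‖ ^ 2 ≤ ‖x - (p + s0 • v)‖ ^ 2 := by
          exact pow_le_pow_left₀ (norm_nonneg _) h2 2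
      _ = ‖(x - p) - s0 • v‖ ^ 2 := by rw [h4]
  have h5 : ‖(x - p) - s0 • v‖ ^ 2 = ‖x - p‖ ^ 2 - 2 * (s0 * c) + s0 ^ 2 * ‖v‖ ^ 2 := by
    rw [norm_sub_sq_real, real_inner_smul_right, norm_smul]
    simp only [Real.norm_eq_abs, mul_pow, sq_abs]
    rfl
  rw [h5] at h3
  have hs : s0 * c = c ^ 2 / ‖v‖ ^ 2 := by rw [hs0]; ring
  have hs2 : s0 ^ 2 * ‖v‖ ^ 2 = c ^ 2 / ‖v‖ ^ 2 := by
    rw [hs0]; field_simp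
  rw [hs, hs2] at h3
  have hcpos : 0 < c ^ 2 / ‖v‖ ^ 2 :=
    div_pos (by positivity) hv2
  linarith

lemma euc_norm_sq {n : ℕ} (a : EuclideanSpace ℝ (Fin n)) : ‖a‖ ^ 2 = ∑ i, a i ^ 2 := by
  rw [EuclideanSpace.norm_eq, Real.sq_sqrt (by positivity)]
  simp [sq_abs]

lemma count_mem {m β : ℕ} (hβ1 : 1 ≤ β) (i : Fin m) :
    ((Finset.powersetCard β (univ : Finset (Fin m))).filter (fun τ => i ∈ τ)).card
      = (m - 1).choose (β - 1) := by
  have : ((Finset.powersetCard β (univ : Finset (Fin m))).filter (fun τ => i ∈ τ)).card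
      = (Finset.powersetCard (β - 1) ((univ : Finset (Fin m)).erase i)).card := by
    refine Finset.card_bij' (fun τ _ => τ.erase i) (fun σ _ => insert i σ) ?_ ?_ ?_ ?_
    · intro τ hτ
      simp only [Finset.mem_filter, Finset.mem_powersetCard] at hτ
      simp only [Finset.mem_powersetCard]
      exact ⟨Finset.erase_subset_erase i hτ.1.1,
        by rw [Finset.card_erase_of_mem hτ.2, hτ.1.2]⟩
    · intro σ hσ
      simp only [Finset.mem_powersetCard] at hσ
      simp only [Finset.mem_filter, Finset.mem_powersetCard]
      have hi : i ∉ σ := fun h => (Finset.mem_erase.mp (hσ.1 h)).1 rfl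
      refine ⟨⟨Finset.subset_univ _, ?_⟩, Finset.mem_insert_self _ _⟩
      rw [Finset.card_insert_of_notMem hi, hσ.2]
      omega
    · intro τ hτ
      simp only [Finset.mem_filter] at hτ
      exact Finset.insert_erase hτ.2
    · intro σ hσ
      simp only [Finset.mem_powersetCard] at hσ
      have hi : i ∉ σ := fun h => (Finset.mem_erase.mp (hσ.1 h)).1 rfl
      exact Finset.erase_insert hi
  rw [this, Finset.card_powersetCard, Finset.card_erase_of_mem (Finset.mem_univ i),
    Finset.card_univ, Fintype.card_fin]

lemma sum_subsets {m β : ℕ} (hβ1 : 1 ≤ β) (f : Fin m → ℝ) :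
    ∑ τ ∈ Finset.powersetCard β (univ : Finset (Fin m)), ∑ i ∈ τ, f i
      = ((m - 1).choose (β - 1) : ℝ) * ∑ i, f i := by
  have h1 : ∀ τ ∈ Finset.powersetCard β (univ : Finset (Fin m)),
      ∑ i ∈ τ, f i = ∑ i : Fin m, if i ∈ τ then f i else 0 := by
    intro τ _
    rw [Finset.sum_ite_mem, Finset.univ_inter]
  rw [Finset.sum_congr rfl h1, Finset.sum_comm]
  rw [Finset.mul_sum]
  refine Finset.sum_congr rfl fun i _ => ?_
  rw [← Finset.sum_filter, Finset.sum_const, count_mem hβ1 i, nsmul_eq_mul]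

lemma mulVec_sub_pt {m n : ℕ} (A : Matrix (Fin m) (Fin n) ℝ) (p q : EuclideanSpace ℝ (Fin n))
    (i : Fin m) : A.mulVec (p - q) i = A.mulVec p i - A.mulVec q i := by
  have h : ∀ j, (p - q) j = p j - q j := fun j => rfl
  simp [Matrix.mulVec, dotProduct, h, mul_sub, Finset.sum_sub_distrib]

lemma mulVec_comb_pt {m n : ℕ} (A : Matrix (Fin m) (Fin n) ℝ) (p q w : EuclideanSpace ℝ (Fin n))
    (s : ℝ) (i : Fin m) :
    A.mulVec (p + s • (q - w)) i = A.mulVec p i + s * (A.mulVec q i - A.mulVec w i) := by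
  have h : ∀ j, (p + s • (q - w)) j = p j + s * (q j - w j) := fun j => rfl
  simp only [Matrix.mulVec, dotProduct, h, Pi.add_apply, Pi.smul_apply, Pi.sub_apply, smul_eq_mul, mul_add, mul_sub, Finset.sum_add_distrib,
    Finset.sum_sub_distrib, Finset.mul_sum]
  congr 1
  congr 1 <;> exact Finset.sum_congr rfl fun j _ => by ring

/-- Theorem 2 of the paper: one BSKM1 step in expectation (the expectation being the
uniform average over all `β`-element sample sets `τ`). -/
theorem bskm1_expected_step
    {m n : ℕ} (A : Matrix (Fin m) (Fin n) ℝ) (hA : A ≠ 0) (b : Fin m → ℝ)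
    (hAA : (Aᵀ * A).IsHermitian)
    (xs : EuclideanSpace ℝ (Fin n)) (hxs : A.mulVec xs = b)
    (hxsR : ∃ u : Fin m → ℝ, Aᵀ.mulVec u = xs)
    (x : EuclideanSpace ℝ (Fin n)) (hxR : ∃ u : Fin m → ℝ, Aᵀ.mulVec u = x)
    (hres : A.mulVec x ≠ b)
    (β : ℕ) (hβ1 : 1 ≤ β) (hβm : β ≤ m)
    (t : Finset (Fin m) → Fin m) (I : Finset (Fin m) → Finset (Fin m))
    (xp : Finset (Fin m) → EuclideanSpace ℝ (Fin n))
    (ht_mem : ∀ τ ∈ subsetsCard m β, t τ ∈ τ)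
    (ht_max : ∀ τ ∈ subsetsCard m β,
      (b (t τ) - A.mulVec x (t τ)) ^ 2 = ⨆ j : τ, (b j - A.mulVec x j) ^ 2)
    (hI : ∀ τ ∈ subsetsCard m β,
      I τ = (Finset.univ \ τ).filter
          (fun h => (b h - A.mulVec x h) ^ 2 ≥ ⨆ j : τ, (b j - A.mulVec x j) ^ 2)
        ∪ {t τ})
    (hp_mem : ∀ τ ∈ subsetsCard m β, ∀ i ∈ I τ, A.mulVec (xp τ) i = b i)
    (hp_min : ∀ τ ∈ subsetsCard m β, ∀ y : EuclideanSpace ℝ (Fin n),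
      (∀ i ∈ I τ, A.mulVec y i = b i) → ‖x - xp τ‖ ≤ ‖x - y‖)
    (ξ : ℝ)
    (hξ : ξ = (∑ τ ∈ subsetsCard m β, ∑ i ∈ τ, (A.mulVec x i - b i) ^ 2) /
        ∑ τ ∈ subsetsCard m β, ⨆ i : τ, (A.mulVec x i - b i) ^ 2)
    (hG : ∀ τ, (gram A (I τ)).IsHermitian)
    (γ : ℝ) (hγ0 : 0 < γ)
    (hγ : ∀ τ ∈ subsetsCard m β, γ ≤ ((I τ).card : ℝ) / lambdaMax (hG τ)) :
    ((m.choose β : ℝ))⁻¹ * ∑ τ ∈ subsetsCard m β, ‖xp τ - xs‖ ^ 2 ≤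
      (1 - ((β : ℝ) * γ / (ξ * (m : ℝ))) * lambdaMinPos hAA) * ‖x - xs‖ ^ 2 := by
  classical
  set P := subsetsCard m β with hPdef
  set r : Fin m → ℝ := fun i => A.mulVec x i - b i with hr
  set Ms : Finset (Fin m) → ℝ := fun τ => ⨆ i : τ, (A.mulVec x i - b i) ^ 2 with hMs
  set H : ℝ := ‖x - xs‖ ^ 2 with hH
  set lam : ℝ := lambdaMinPos hAA with hlam
  set N : ℝ := (m.choose β : ℝ) with hNdef
  set C' : ℝ := ((m - 1).choose (β - 1) : ℝ) with hC'
  have hm0 : 0 < m := lt_of_lt_of_le hβ1 hβm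
  have hN : (0 : ℝ) < N := by rw [hNdef]; exact_mod_cast Nat.choose_pos hβm
  have hC'0 : (0 : ℝ) ≤ C' := by rw [hC']; positivity
  have hcardP : (P.card : ℝ) = N := by
    rw [hPdef, hNdef]
    norm_cast
    simp [subsetsCard, Finset.card_powersetCard]
  -- sup attained at t τ
  have hMt : ∀ τ ∈ P, Ms τ = r (t τ) ^ 2 := by
    intro τ hτ
    have h1 : Ms τ = ⨆ i : τ, (b i - A.mulVec x i) ^ 2 := by
      rw [hMs]; exact iSup_congr fun i => by ring
    rw [h1, ← ht_max τ hτ, hr]; ring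
  have hM0 : ∀ τ ∈ P, 0 ≤ Ms τ := fun τ hτ => (hMt τ hτ) ▸ sq_nonneg _
  have hMub : ∀ τ ∈ P, ∀ i ∈ τ, r i ^ 2 ≤ Ms τ := by
    intro τ hτ i hi
    have hbd : BddAbove (Set.range fun j : {j // j ∈ τ} => (A.mulVec x (j : Fin m) - b j) ^ 2) :=
      Set.Finite.bddAbove (Set.finite_range _)
    exact le_ciSup hbd (⟨i, hi⟩ : {j // j ∈ τ})
  have hMlb : ∀ τ ∈ P, ∀ i ∈ I τ, Ms τ ≤ r i ^ 2 := by
    intro τ hτ i hi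
    rw [hI τ hτ] at hi
    rcases Finset.mem_union.mp hi with h | h
    · have h2 := (Finset.mem_filter.mp h).2
      have h3 : Ms τ = ⨆ j : τ, (b j - A.mulVec x j) ^ 2 := by
        rw [hMs]; exact iSup_congr fun j => by ring
      have h4 : (b i - A.mulVec x i) ^ 2 = r i ^ 2 := by rw [hr]; ring
      rw [h3]; rw [← h4]; exact h2
    · have h4 : i = t τ := Finset.mem_singleton.mp h
      rw [h4, hMt τ hτ]
  have hxs_feas : ∀ i, A.mulVec xs i = b i := fun i => congrFun hxs i
  -- Pythagoras
  have hpyth : ∀ τ ∈ P, H = ‖x - xp τ‖ ^ 2 + ‖xp τ - xs‖ ^ 2 := by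
    intro τ hτ
    have horth : ⟪x - xp τ, xs - xp τ⟫ = 0 := by
      apply min_orth
      intro s
      apply hp_min τ hτ
      intro i hi
      rw [WithLp.ofLp_add, WithLp.ofLp_smul, WithLp.ofLp_sub, mulVec_comb_pt A (xp τ) xs (xp τ) s i, hp_mem τ hτ i hi, hxs_feas i]
      ring
    have he : x - xs = (x - xp τ) - (xs - xp τ) := by abel
    have hnr : ‖xs - xp τ‖ = ‖xp τ - xs‖ := norm_sub_rev _ _
    rw [hH, he, norm_sub_sq_real, horth, hnr]
    ring
  -- key per-τ inequality
  have hkey : ∀ τ ∈ P, γ * Ms τ ≤ ‖x - xp τ‖ ^ 2 := by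
    intro τ hτ
    set v : Fin n → ℝ := fun j => x j - xp τ j with hv
    have hveq : ∀ j, (x - xp τ) j = v j := fun j => rfl
    have hnv : ‖x - xp τ‖ ^ 2 = v ⬝ᵥ v := by
      rw [euc_norm_sq]
      simp only [dotProduct, hveq, sq]
    have hIne : t τ ∈ I τ := by
      rw [hI τ hτ]; exact Finset.mem_union_right _ (Finset.mem_singleton_self _)
    have hIcard : 0 < (I τ).card := Finset.card_pos.mpr ⟨t τ, hIne⟩
    have hAv : ∀ i ∈ I τ, A.mulVec v i = r i := by
      intro i hi
      have h5 : A.mulVec v i = A.mulVec x i - A.mulVec (xp τ) i := mulVec_sub_pt A x (xp τ) i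
      rw [h5, hp_mem τ hτ i hi, hr]
    have h1 : v ⬝ᵥ ((gram A (I τ)) *ᵥ v) = ∑ i ∈ I τ, r i ^ 2 := by
      rw [gram_quad]
      exact Finset.sum_congr rfl fun i hi => by rw [hAv i hi]
    have h2 : ((I τ).card : ℝ) * Ms τ ≤ ∑ i ∈ I τ, r i ^ 2 := by
      calc ((I τ).card : ℝ) * Ms τ = ∑ _i ∈ I τ, Ms τ := by
            rw [Finset.sum_const, nsmul_eq_mul]
        _ ≤ ∑ i ∈ I τ, r i ^ 2 := Finset.sum_le_sum (hMlb τ hτ)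
    have h3 : v ⬝ᵥ ((gram A (I τ)) *ᵥ v) ≤ lambdaMax (hG τ) * (v ⬝ᵥ v) :=
      quad_le_lambdaMax (hG τ) v
    have hps : (gram A (I τ)).PosSemidef := by
      rw [_root_.gram, ← Matrix.conjTranspose_eq_transpose_of_trivial]
      exact Matrix.posSemidef_conjTranspose_mul_self _
    have hlamnn : 0 ≤ lambdaMax (hG τ) := by
      show (0:ℝ) ≤ ⨆ i, (hG τ).eigenvalues i
      exact Real.iSup_nonneg fun i => hps.eigenvalues_nonneg i
    have hlampos : 0 < lambdaMax (hG τ) := by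
      rcases eq_or_lt_of_le hlamnn with h | h
      · exfalso; have h6 := hγ τ hτ; rw [← h, div_zero] at h6; linarith
      · exact h
    have h4 : γ * lambdaMax (hG τ) ≤ ((I τ).card : ℝ) := (le_div_iff₀ hlampos).mp (hγ τ hτ)
    have hvv : 0 ≤ v ⬝ᵥ v := by rw [← hnv]; positivity
    have h5 : ((I τ).card : ℝ) * (γ * Ms τ) ≤ ((I τ).card : ℝ) * (v ⬝ᵥ v) := by
      calc ((I τ).card : ℝ) * (γ * Ms τ) = γ * (((I τ).card : ℝ) * Ms τ) := by ring
        _ ≤ γ * (v ⬝ᵥ (gram A (I τ) *ᵥ v)) := by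
            apply mul_le_mul_of_nonneg_left _ (le_of_lt hγ0)
            rw [h1]; exact h2
        _ ≤ γ * (lambdaMax (hG τ) * (v ⬝ᵥ v)) := mul_le_mul_of_nonneg_left h3 (le_of_lt hγ0)
        _ = (γ * lambdaMax (hG τ)) * (v ⬝ᵥ v) := by ring
        _ ≤ ((I τ).card : ℝ) * (v ⬝ᵥ v) := mul_le_mul_of_nonneg_right h4 hvv
    have hcpos : (0 : ℝ) < ((I τ).card : ℝ) := by exact_mod_cast hIcard
    have h6 : γ * Ms τ ≤ v ⬝ᵥ v := le_of_mul_le_mul_left h5 hcpos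
    rw [hnv]; exact h6
  -- sum step
  set T : ℝ := ∑ τ ∈ P, Ms τ with hT
  set S : ℝ := ∑ τ ∈ P, ∑ i ∈ τ, r i ^ 2 with hS
  have hsum1 : ∑ τ ∈ P, ‖xp τ - xs‖ ^ 2 ≤ N * H - γ * T := by
    have hstep : ∀ τ ∈ P, ‖xp τ - xs‖ ^ 2 ≤ H - γ * Ms τ := by
      intro τ hτ
      have e1 := hpyth τ hτ
      have e2 := hkey τ hτ
      linarith
    calc ∑ τ ∈ P, ‖xp τ - xs‖ ^ 2 ≤ ∑ τ ∈ P, (H - γ * Ms τ) := Finset.sum_le_sum hstep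
      _ = (P.card : ℝ) * H - γ * T := by
          rw [Finset.sum_sub_distrib, Finset.sum_const, nsmul_eq_mul, hT, Finset.mul_sum]
      _ = N * H - γ * T := by rw [hcardP]
  -- positivity of S and T
  obtain ⟨i0, hi0⟩ : ∃ i, A.mulVec x i ≠ b i := by
    by_contra h; push_neg at h; exact hres (funext h)
  have hri0 : 0 < r i0 ^ 2 := pow_two_pos_of_ne_zero (sub_ne_zero.mpr hi0)
  obtain ⟨τ0, hτ0sub, -, hτ0card⟩ :=
    Finset.exists_subsuperset_card_eq (Finset.subset_univ {i0})
      (by simpa using hβ1) (by simpa using hβm)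
  have hτ0P : τ0 ∈ P := by
    rw [hPdef]
    simp only [subsetsCard, Finset.mem_powersetCard]
    exact ⟨Finset.subset_univ _, hτ0card⟩
  have hi0τ0 : i0 ∈ τ0 := hτ0sub (Finset.mem_singleton_self i0)
  have hTpos : 0 < T := by
    have h1 : Ms τ0 ≤ T := Finset.single_le_sum hM0 hτ0P
    have h2 : r i0 ^ 2 ≤ Ms τ0 := hMub τ0 hτ0P i0 hi0τ0
    linarith
  have hSpos : 0 < S := by
    have h0 : ∀ τ ∈ P, (0:ℝ) ≤ ∑ i ∈ τ, r i ^ 2 := fun τ _ => by positivity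
    have h1 : ∑ i ∈ τ0, r i ^ 2 ≤ S := Finset.single_le_sum h0 hτ0P
    have h2 : r i0 ^ 2 ≤ ∑ i ∈ τ0, r i ^ 2 :=
      Finset.single_le_sum (fun i _ => sq_nonneg (r i)) hi0τ0
    linarith
  have hξ' : ξ = S / T := hξ
  have hξpos : 0 < ξ := by rw [hξ']; exact div_pos hSpos hTpos
  have hST : S = ξ * T := by rw [hξ']; field_simp
  have hSR : S = C' * ∑ i, r i ^ 2 := sum_subsets hβ1 _
  -- lower bound on full residual
  have hRH : lam * H ≤ ∑ i, r i ^ 2 := by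
    obtain ⟨u1, hu1⟩ := hxR
    obtain ⟨u2, hu2⟩ := hxsR
    set v : Fin n → ℝ := fun j => x j - xs j with hv
    have hveq : v = Aᵀ *ᵥ (u1 - u2) := by
      funext j
      rw [Matrix.mulVec_sub]
      have e1 := congrFun hu1 j
      have e2 := congrFun hu2 j
      simp only [Pi.sub_apply]
      rw [e1, e2]
    have h1 := lambdaMinPos_quad A hAA (u1 - u2) v hveq
    have h2 : v ⬝ᵥ v = H := by
      rw [hH, euc_norm_sq]
      have hve : ∀ j, (x - xs) j = v j := fun j => rfl
      simp only [dotProduct, hve, sq]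
    have h4 : A *ᵥ v = r := by
      funext i
      have h5 : A.mulVec v i = A.mulVec x i - A.mulVec xs i := mulVec_sub_pt A x xs i
      rw [h5, hxs_feas i, hr]
    have h3 : v ⬝ᵥ ((Aᵀ * A) *ᵥ v) = ∑ i, r i ^ 2 := by
      rw [transpose_quad, h4]
      simp [dotProduct, sq]
    rw [h2] at h1
    rw [← h3]
    exact h1
  -- binomial identity
  have hmc : (m : ℝ) * C' = (β : ℝ) * N := by
    have hnat : m * (m - 1).choose (β - 1) = β * m.choose β := by
      obtain ⟨m', rfl⟩ : ∃ m', m = m' + 1 := ⟨m - 1, by omega⟩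
      obtain ⟨β', rfl⟩ : ∃ β', β = β' + 1 := ⟨β - 1, by omega⟩
      simp only [Nat.add_sub_cancel]
      rw [Nat.mul_comm (β' + 1)]
      exact Nat.add_one_mul_choose_eq m' β'
    rw [hC', hNdef]
    exact_mod_cast hnat
  -- final combination
  have hkey2 : (β : ℝ) * γ / (ξ * (m : ℝ)) * lam * H * N ≤ γ * T := by
    have hTS : T = S / ξ := by rw [hST]; field_simp
    have hTval : γ * T = γ * (C' * ∑ i, r i ^ 2) / ξ := by
      rw [hTS, hSR]; ring
    have hmne : (m : ℝ) ≠ 0 := by exact_mod_cast hm0.ne'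
    have hξne : ξ ≠ 0 := hξpos.ne'
    calc (β : ℝ) * γ / (ξ * (m : ℝ)) * lam * H * N = γ * (C' * (lam * H)) / ξ := by
          field_simp
          linear_combination (-(lam * ‖x - xs‖ ^ 2)) * hmc
      _ ≤ γ * (C' * ∑ i, r i ^ 2) / ξ := by
          have hnum : γ * (C' * (lam * H)) ≤ γ * (C' * ∑ i, r i ^ 2) :=
            mul_le_mul_of_nonneg_left (mul_le_mul_of_nonneg_left hRH hC'0) hγ0.le
          exact (div_le_div_iff_of_pos_right hξpos).mpr hnum
      _ = γ * T := hTval.symm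
  have hfinal : ∑ τ ∈ P, ‖xp τ - xs‖ ^ 2 ≤ N * ((1 - (β : ℝ) * γ / (ξ * (m : ℝ)) * lam) * H) := by
    calc ∑ τ ∈ P, ‖xp τ - xs‖ ^ 2 ≤ N * H - γ * T := hsum1
      _ ≤ N * H - (β : ℝ) * γ / (ξ * (m : ℝ)) * lam * H * N := by linarith
      _ = N * ((1 - (β : ℝ) * γ / (ξ * (m : ℝ)) * lam) * H) := by ring
  calc N⁻¹ * ∑ τ ∈ P, ‖xp τ - xs‖ ^ 2
      ≤ N⁻¹ * (N * ((1 - (β : ℝ) * γ / (ξ * (m : ℝ)) * lam) * H)) :=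
        mul_le_mul_of_nonneg_left hfinal (inv_nonneg.mpr hN.le)
    _ = (1 - (β : ℝ) * γ / (ξ * (m : ℝ)) * lam) * H := by
        rw [inv_mul_cancel_left₀ hN.ne']
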